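/- arXiv:0709.4435 — 2 statements merged into one kernel-verified Lean document; each statement's English description precedes it below -/
import Mathlib

section
/- Let n ≥ 2, let i, j ∈ {1,...,n} with i ≠ j, and work on the open subset of ℝ^{n + n(n-1)} with coordinates (A_1,...,A_n, (A_{kl})_{k≠l}) where all A_k ≠ 0. For each k define the vector field V_k = A_k·∂_{A_k} + ∑_{l≠k} (A_{kl}·∂_{A_{kl}} − A_{lk}·∂_{A_{lk}}). Then the function T_{ij} = A_{ij}·A_j/A_i satisfies V_k(T_{ij}) = 0 for every k ∈ {1,...,n}. -/
/-- Index type for the coordinates `A₁, …, Aₙ` (left summand) and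
`A_{kl}` for `k ≠ l` (right summand). -/
abbrev Idx (n : ℕ) := Fin n ⊕ {q : Fin n × Fin n // q.1 ≠ q.2}

/-- The vector field `V_k = A_k ∂_{A_k} + ∑_{l ≠ k} (A_{kl} ∂_{A_{kl}} − A_{lk} ∂_{A_{lk}})`. -/
def Vgen {n : ℕ} (k : Fin n) (p : Idx n → ℝ) : Idx n → ℝ := fun idx =>
  match idx with
  | .inl m => if m = k then p idx else 0
  | .inr ⟨(i, j), _⟩ => if i = k then p idx else if j = k then -p idx else 0

/-- The function `T_{ij} = A_{ij} A_j / A_i`. -/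
noncomputable def Tinv {n : ℕ} (i j : Fin n) (h : i ≠ j) (p : Idx n → ℝ) : ℝ :=
  p (.inr ⟨(i, j), h⟩) * p (.inl j) / p (.inl i)

/-!
Each `V_k` is the diagonal scaling field `A_x ∂_{A_x}` weighted by `w_k(x) ∈ {1, -1, 0}`.
Along such a field the monomial `A_{ij} A_j / A_i` is differentiated to
`(w(ij) + w(j) - w(i))` times itself, and for the weights of `V_k` this sum vanishes:
for `k = i` the weights of `A_{ij}` and `A_i` are both `1`, for `k = j` those of `A_{ij}` and
`A_j` are `-1` and `1`, and otherwise all three are `0`.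
-/

theorem fderiv_apply_mul_apply_div_apply {𝕜 ι : Type*} [NontriviallyNormedField 𝕜] [Fintype ι]
    (a b c : ι) {p : ι → 𝕜} (hc : p c ≠ 0) (v : ι → 𝕜) :
    fderiv 𝕜 (fun q : ι → 𝕜 => q a * q b / q c) p v
      = (v a * p b + p a * v b) / p c - p a * p b * v c / p c ^ 2 := by
  have hinv : HasFDerivAt (fun q : ι → 𝕜 => (q c)⁻¹)
      ((-(p c ^ 2)⁻¹) • ContinuousLinearMap.proj (R := 𝕜) (φ := fun _ : ι => 𝕜) c) p := by
    simpa [Function.comp_def] using (hasDerivAt_inv hc).comp_hasFDerivAt p (hasFDerivAt_apply c p)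
  have hf := ((hasFDerivAt_apply a p).fun_mul (hasFDerivAt_apply b p)).fun_mul hinv
  simp only [div_eq_mul_inv]
  rw [hf.fderiv]
  simp only [smul_add, add_apply, smul_apply, ContinuousLinearMap.proj_apply, smul_eq_mul,
    neg_mul, mul_neg]
  field_simp
  ring

theorem fderiv_apply_mul_apply_div_apply_weighted {𝕜 ι : Type*} [NontriviallyNormedField 𝕜]
    [Fintype ι] (a b c : ι) {p : ι → 𝕜} (hc : p c ≠ 0) (w : ι → 𝕜) :
    fderiv 𝕜 (fun q : ι → 𝕜 => q a * q b / q c) p (w * p)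
      = (w a + w b - w c) * (p a * p b / p c) := by
  rw [fderiv_apply_mul_apply_div_apply a b c hc]
  simp only [Pi.mul_apply]
  field_simp

def vgenWeight {n : ℕ} (k : Fin n) : Idx n → ℝ
  | .inl m => if m = k then 1 else 0
  | .inr ⟨(i, j), _⟩ => if i = k then 1 else if j = k then -1 else 0

theorem Vgen_eq_vgenWeight_mul {n : ℕ} (k : Fin n) (p : Idx n → ℝ) :
    Vgen k p = vgenWeight k * p := by
  funext x
  rcases x with m | ⟨⟨i, j⟩, _⟩ <;> simp only [Vgen, vgenWeight, Pi.mul_apply] <;> split_ifs <;> simp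

theorem vgenWeight_inr_add_inl_sub_inl {n : ℕ} (k : Fin n) {i j : Fin n} (h : i ≠ j) :
    vgenWeight k (.inr ⟨(i, j), h⟩) + vgenWeight k (.inl j) - vgenWeight k (.inl i) = 0 := by
  rcases eq_or_ne i k with rfl | hik
  · simp [vgenWeight, h.symm]
  · by_cases hjk : j = k <;> simp [vgenWeight, hik, hjk]

theorem Tij_invariant_general {n : ℕ} (i j : Fin n) (h : i ≠ j)
    (p : Idx n → ℝ) (hp : ∀ m, p (.inl m) ≠ 0) :
    ∀ k : Fin n, fderiv ℝ (Tinv i j h) p (Vgen k p) = 0 := by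
  intro k
  unfold Tinv
  rw [Vgen_eq_vgenWeight_mul, fderiv_apply_mul_apply_div_apply_weighted _ _ _ (hp i),
    vgenWeight_inr_add_inl_sub_inl, zero_mul]

theorem Tij_invariant {n : ℕ} (hn : 2 ≤ n) (i j : Fin n) (h : i ≠ j)
    (p : Idx n → ℝ) (hp : ∀ m, p (.inl m) ≠ 0) :
    ∀ k : Fin n, fderiv ℝ (Tinv i j h) p (Vgen k p) = 0 :=
  Tij_invariant_general i j h p hp
end

section
/- In the coordinates (a, b, a_y, b_y, a_{yy}, b_{xx}, ...), let K₁₂ = a_{yy}·b/a_y + b_y. For the two vector fields V₁ = a·∂_a + a_y·∂_{a_y} + a_{yy}·∂_{a_{yy}} − b_x·∂_{b_x} − 2b_{xx}·∂_{b_{xx}} − 2b_{xy}·∂_{b_{xy}} and V₂ = b·∂_b − a_y·∂_{a_y} − 2a_{xy}·∂_{a_{xy}} − 2a_{yy}·∂_{a_{yy}} + b_x·∂_{b_x} + b_{xx}·∂_{b_{xx}}, and the second-order generators W₁ = a·∂_{a_x} + 2a_y·∂_{a_{xy}} − b_x·∂_{b_{xx}} and W₂ = −a_y·∂_{a_{yy}}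 + b·∂_{b_y} + 2b_x·∂_{b_{xy}}, one has V₁(K₁₂) = V₂(K₁₂) = W₁(K₁₂) = W₂(K₁₂) = 0 wherever a, b, a_y ≠ 0. -/
/-- Coordinates on ℝ¹⁰ :
`p 0 = a`, `p 1 = b`, `p 2 = a_x`, `p 3 = a_y`, `p 4 = b_x`,
`p 5 = b_y`, `p 6 = a_{xy}`, `p 7 = a_{yy}`, `p 8 = b_{xx}`, `p 9 = b_{xy}`. -/
noncomputable def V1 (p : Fin 10 → ℝ) : Fin 10 → ℝ :=
  ![p 0, 0, 0, p 3, -p 4, 0, 0, p 7, -2 * p 8, -2 * p 9]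

noncomputable def V2 (p : Fin 10 → ℝ) : Fin 10 → ℝ :=
  ![0, p 1, 0, -p 3, p 4, 0, -2 * p 6, -2 * p 7, p 8, 0]

noncomputable def W1 (p : Fin 10 → ℝ) : Fin 10 → ℝ :=
  ![0, 0, p 0, 0, 0, 0, 2 * p 3, 0, -p 4, 0]

noncomputable def W2 (p : Fin 10 → ℝ) : Fin 10 → ℝ :=
  ![0, 0, 0, 0, 0, p 1, 0, -p 3, 0, 2 * p 4]

/-- `K₁₂ = a_{yy}·b/a_y + b_y`. -/
noncomputable def K12 (p : Fin 10 → ℝ) : ℝ := p 7 * p 1 / p 3 + p 5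

theorem K12_invariant (p : Fin 10 → ℝ) (ha : p 0 ≠ 0) (hb : p 1 ≠ 0) (hay : p 3 ≠ 0) :
    fderiv ℝ K12 p (V1 p) = 0 ∧ fderiv ℝ K12 p (V2 p) = 0 ∧
    fderiv ℝ K12 p (W1 p) = 0 ∧ fderiv ℝ K12 p (W2 p) = 0 := by
  have h7 := hasFDerivAt_apply (𝕜 := ℝ) (7 : Fin 10) p
  have h1 := hasFDerivAt_apply (𝕜 := ℝ) (1 : Fin 10) p
  have h3 := hasFDerivAt_apply (𝕜 := ℝ) (3 : Fin 10) p
  have h5 := hasFDerivAt_apply (𝕜 := ℝ) (5 : Fin 10) p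
  have hinv : HasFDerivAt (fun q : Fin 10 → ℝ => (q 3)⁻¹)
      ((-((p 3) ^ 2)⁻¹) • (ContinuousLinearMap.proj 3 : (Fin 10 → ℝ) →L[ℝ] ℝ)) p :=
    (hasDerivAt_inv hay).comp_hasFDerivAt p h3
  have hKeq : K12 = fun q : Fin 10 → ℝ => q 7 * q 1 * (q 3)⁻¹ + q 5 := by
    funext q; simp [K12, div_eq_mul_inv]
  have hK : HasFDerivAt (fun q : Fin 10 → ℝ => q 7 * q 1 * (q 3)⁻¹ + q 5) _ p :=
    (((h7.mul h1).mul hinv).add h5)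
  rw [hKeq] at *
  rw [hK.fderiv]
  have eV1 : V1 p 7 = p 7 ∧ V1 p 1 = 0 ∧ V1 p 3 = p 3 ∧ V1 p 5 = 0 := ⟨rfl, rfl, rfl, rfl⟩
  have eV2 : V2 p 7 = -2 * p 7 ∧ V2 p 1 = p 1 ∧ V2 p 3 = -p 3 ∧ V2 p 5 = 0 :=
    ⟨rfl, rfl, rfl, rfl⟩
  have eW1 : W1 p 7 = 0 ∧ W1 p 1 = 0 ∧ W1 p 3 = 0 ∧ W1 p 5 = 0 := ⟨rfl, rfl, rfl, rfl⟩
  have eW2 : W2 p 7 = -p 3 ∧ W2 p 1 = 0 ∧ W2 p 3 = 0 ∧ W2 p 5 = p 1 := ⟨rfl, rfl, rfl, rfl⟩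
  refine ⟨?_, ?_, ?_, ?_⟩ <;>
  · simp only [ContinuousLinearMap.add_apply, ContinuousLinearMap.smul_apply,
      ContinuousLinearMap.neg_apply, ContinuousLinearMap.proj_apply, smul_eq_mul, Pi.mul_apply,
      eV1.1, eV1.2.1, eV1.2.2.1, eV1.2.2.2, eV2.1, eV2.2.1, eV2.2.2.1, eV2.2.2.2,
      eW1.1, eW1.2.1, eW1.2.2.1, eW1.2.2.2, eW2.1, eW2.2.1, eW2.2.2.1, eW2.2.2.2]
    field_simp
    try ring
end
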